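/- arXiv:2506.06172 — 5 statements merged into one kernel-verified Lean document; each statement's English description precedes it below -/
import Mathlib

section
/- A set T of infinite traces over D is completely monitorable (there exists a sound and complete monitor for T) if and only if there exist sets G, B of finite traces such that T equals the set of infinite traces having a prefix in G, and the complement of T equals the set of infinite traces having a prefix in B. -/
/-!
A sound and complete monitor yields the good and bad prefixes directly: `G = acc`, `B = rej`.
Conversely, given `G` and `B`, accept a finite trace when all of its infinite extensions lie in `T`
and reject it when none does. Soundness and irrevocability are then immediate, completeness
holds because a prefix in `G` (resp. `B`) has all its extensions in `T` (resp. outside `T`), and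
consistency holds because over a nonempty alphabet every finite trace has an infinite extension.
-/

/-- A finite trace `w` is an initial segment of the infinite trace `t`. -/
def Extends {D : Type*} (w : List D) (t : ℕ → D) : Prop :=
  ∀ i : Fin w.length, t i.1 = w.get i

/-- `T` is characterised by its sets of good and bad prefixes. -/
def CompletelyMonitorable {D : Type*} (T : Set (ℕ → D)) : Prop :=
  ∃ G B : Set (List D),
    T = {t | ∃ w ∈ G, Extends w t} ∧
    Tᶜ = {t | ∃ w ∈ B, Extends w t}

namespace Extends

variable {D : Type*}

theorem of_prefix {v w : List D} {t : ℕ → D} (hvw : v <+: w) (hwt : Extends w t) :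
    Extends v t := fun i => by
  rw [hwt ⟨i, i.2.trans_le hvw.length_le⟩]
  exact (hvw.getElem i.2).symm

theorem exists_of_nonempty [Nonempty D] (w : List D) : ∃ t : ℕ → D, Extends w t :=
  ⟨fun i => w.getD i (Classical.arbitrary D), fun i => by simp⟩

end Extends

theorem completely_monitorable_iff_exists_monitor
    {D : Type*} [Nonempty D] (T : Set (ℕ → D)) :
    (∃ acc rej : List D → Prop,
      -- consistency
      (∀ w : List D, ¬(acc w ∧ rej w)) ∧
      -- irrevocability
      (∀ w y : List D, w <+: y → (acc w → acc y) ∧ (rej w → rej y)) ∧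
      -- soundness
      (∀ t : ℕ → D, (∃ w : List D, Extends w t ∧ acc w) → t ∈ T) ∧
      (∀ t : ℕ → D, (∃ w : List D, Extends w t ∧ rej w) → t ∉ T) ∧
      -- completeness
      (∀ t ∈ T, ∃ w : List D, Extends w t ∧ acc w) ∧
      (∀ t ∉ T, ∃ w : List D, Extends w t ∧ rej w))
    ↔ CompletelyMonitorable T := by
  constructor
  · rintro ⟨acc, rej, -, -, hacc, hrej, hT, hTc⟩
    exact ⟨{w | acc w}, {w | rej w},
      Set.ext fun t => ⟨fun ht => (hT t ht).imp fun _ h => h.symm,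
        fun ⟨w, hw, hwt⟩ => hacc t ⟨w, hwt, hw⟩⟩,
      Set.ext fun t => ⟨fun ht => (hTc t ht).imp fun _ h => h.symm,
        fun ⟨w, hw, hwt⟩ => hrej t ⟨w, hwt, hw⟩⟩⟩
  · rintro ⟨G, B, hG, hB⟩
    refine ⟨fun w => ∀ t, Extends w t → t ∈ T, fun w => ∀ t, Extends w t → t ∉ T,
      fun w ⟨hacc, hrej⟩ => ?_, fun w y hwy => ⟨?_, ?_⟩,
      fun t ⟨w, hwt, hw⟩ => hw t hwt, fun t ⟨w, hwt, hw⟩ => hw t hwt, fun t ht => ?_,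
      fun t ht => ?_⟩
    · obtain ⟨t, hwt⟩ := Extends.exists_of_nonempty w
      exact hrej t hwt (hacc t hwt)
    · exact fun hw t hyt => hw t (hyt.of_prefix hwy)
    · exact fun hw t hyt => hw t (hyt.of_prefix hwy)
    · obtain ⟨w, hwG, hwt⟩ : t ∈ {t | ∃ w ∈ G, Extends w t} := hG ▸ ht
      exact ⟨w, hwt, fun s hws => hG ▸ ⟨w, hwG, hws⟩⟩
    · obtain ⟨w, hwB, hwt⟩ : t ∈ {t | ∃ w ∈ B, Extends w t} := hB ▸ ht
      exact ⟨w, hwt, fun s hws => (hB ▸ ⟨w, hwB, hws⟩ : s ∈ Tᶜ)⟩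
end

section
/- A set T of infinite traces over a data domain D is completely monitorable if and only if T is a clopen subset of D^ω, where D^ω carries the product topology of the discrete topology on D. -/
/-!
The traces extending a finite word `w` form the cylinder of length `|w|` around any one of them,
and these cylinders are a basis of the product topology. Hence the sets of the form
`{t | ∃ w ∈ G, Extends w t}` are exactly the open sets, and `T` has both good and bad prefixes
iff `T` and `Tᶜ` are open.
-/

open PiNat

section

variable {D : Type*}

theorem extends_iff_mem_cylinder {w : List D} {s t : ℕ → D} (hs : Extends w s) :
    Extends w t ↔ t ∈ cylinder s w.length := by
  rw [mem_cylinder_iff, Extends]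
  refine ⟨fun ht i hi => ?_, fun ht i => ?_⟩
  · rw [ht ⟨i, hi⟩, hs ⟨i, hi⟩]
  · rw [ht i i.2, hs i]

theorem extends_ofFn (t : ℕ → D) (n : ℕ) : Extends (List.ofFn fun i : Fin n => t i) t :=
  fun i => by simp

variable [TopologicalSpace D] [DiscreteTopology D]

theorem isOpen_setOf_extends (w : List D) : IsOpen {t | Extends w t} :=
  isOpen_iff_forall_mem_open.2 fun s hs =>
    ⟨cylinder s w.length, fun _ ht => (extends_iff_mem_cylinder hs).2 ht,
      isOpen_cylinder _ s _, self_mem_cylinder s _⟩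

theorem isOpen_setOf_exists_extends (G : Set (List D)) :
    IsOpen {t | ∃ w ∈ G, Extends w t} := by
  have hG : {t | ∃ w ∈ G, Extends w t} = ⋃ w ∈ G, {t | Extends w t} := by
    ext t
    simp
  rw [hG]
  exact isOpen_biUnion fun w _ => isOpen_setOf_extends w

theorem IsOpen.eq_setOf_exists_extends {S : Set (ℕ → D)} (hS : IsOpen S) :
    S = {t | ∃ w ∈ {w : List D | {t | Extends w t} ⊆ S}, Extends w t} := by
  ext t
  refine ⟨fun ht => ?_, fun ⟨w, hw, hwt⟩ => hw hwt⟩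
  obtain ⟨_, ⟨s, n, rfl⟩, hts, hsub⟩ :=
    (isTopologicalBasis_cylinders fun _ => D).exists_subset_of_mem_open ht hS
  refine ⟨List.ofFn fun i : Fin n => t i, fun t' ht' => hsub ?_, extends_ofFn t n⟩
  rw [← mem_cylinder_iff_eq.1 hts]
  simpa using (extends_iff_mem_cylinder (extends_ofFn t n)).1 ht'

end

theorem completely_monitorable_iff_clopen_general
    {D : Type*} [TopologicalSpace D] [DiscreteTopology D]
    (T : Set (ℕ → D)) :
    CompletelyMonitorable T ↔ IsClopen T := by
  constructor
  · rintro ⟨G, B, hG, hB⟩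
    refine ⟨?_, ?_⟩
    · rw [← isOpen_compl_iff, hB]
      exact isOpen_setOf_exists_extends B
    · rw [hG]
      exact isOpen_setOf_exists_extends G
  · intro hT
    exact ⟨_, _, hT.isOpen.eq_setOf_exists_extends, hT.isClosed.isOpen_compl.eq_setOf_exists_extends⟩

theorem completely_monitorable_iff_clopen
    {D : Type*} [Nonempty D] [TopologicalSpace D] [DiscreteTopology D]
    (T : Set (ℕ → D)) :
    CompletelyMonitorable T ↔ IsClopen T :=
  completely_monitorable_iff_clopen_general T
end

section
/- If D has at least three elements, then a subset S ⊆ D × D is stable under all bijections of D acting coordinatewise if and only if S is a union of (possibly neither, one, or both of) the diagonal {(a,a) : a ∈ D} and the off-diagonal {(a,b) : a ≠ b}. In particular there are exactly four such subsets. -/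
/-! `Equiv.Perm D` is 2-transitive on `D`, so its action on `D × D` has exactly two orbits: the
diagonal and, as soon as `D` has two distinct points, its complement. A set invariant under a group
action is a union of orbits, which leaves `∅`, the diagonal, its complement and `univ`. -/

open MulAction Set Pointwise

namespace MulAction

variable {G X : Type*} [Group G] [MulAction G X] {S A : Set X}

theorem IsFixedBlock.orbit_subset (hS : IsFixedBlock G S) {x : X} (hx : x ∈ S) :
    orbit G x ⊆ S := by
  rintro _ ⟨g, rfl⟩
  rw [← hS g]
  exact smul_mem_smul_set hx

theorem IsFixedBlock.orbit_subset_or_disjoint (hS : IsFixedBlock G S) (a : X) :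
    orbit G a ⊆ S ∨ Disjoint (orbit G a) S := by
  refine or_iff_not_imp_right.2 fun h => ?_
  obtain ⟨y, hya, hyS⟩ := not_disjoint_iff.1 h
  rw [← orbit_eq_iff.2 hya]
  exact hS.orbit_subset hyS

theorem isFixedBlock_iff_of_orbit_eq_compl {a b : X} (ha : orbit G a = A)
    (hb : orbit G b = Aᶜ) :
    IsFixedBlock G S ↔ S = ∅ ∨ S = A ∨ S = Aᶜ ∨ S = univ := by
  constructor
  · intro hS
    rcases ha ▸ hS.orbit_subset_or_disjoint a with hAS | hAS <;>
      rcases hb ▸ hS.orbit_subset_or_disjoint b with hAcS | hAcS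
    · exact Or.inr <| Or.inr <| Or.inr <| eq_univ_of_univ_subset <|
        union_compl_self A ▸ union_subset hAS hAcS
    · exact Or.inr <| Or.inl <| (disjoint_compl_left_iff_subset.1 hAcS).antisymm hAS
    · exact Or.inr <| Or.inr <| Or.inl <| hAS.subset_compl_left.antisymm hAcS
    · exact Or.inl <| disjoint_self.1 <| hAS.mono_left <| disjoint_compl_left_iff_subset.1 hAcS
  · rintro (rfl | rfl | rfl | rfl)
    · exact fun g => smul_set_empty
    · exact ha ▸ IsFixedBlock.orbit a
    · exact hb ▸ IsFixedBlock.orbit b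
    · exact IsFixedBlock.univ

end MulAction

theorem Set.ncard_insert_empty_compl_univ {X : Type*} {A : Set X} (h : A.Nonempty)
    (hc : Aᶜ.Nonempty) : ({∅, A, Aᶜ, univ} : Set (Set X)).ncard = 4 := by
  have : Nonempty X := h.to_subtype.map Subtype.val
  rw [ncard_insert_of_notMem, ncard_insert_of_notMem, ncard_pair]
  all_goals simp [h.ne_empty.symm, hc.ne_empty.symm, nonempty_compl.1 hc, compl_ne_univ.2 h,
    empty_ne_univ]

namespace Equiv.Perm

variable {α : Type*}

theorem exists_apply_eq_and_apply_eq {a b x y : α} (hab : a ≠ b) (hxy : x ≠ y) :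
    ∃ σ : Perm α, σ a = x ∧ σ b = y := by
  obtain ⟨σ, hσ⟩ := exists_extending_pair ![a, b] ![x, y]
    (injective_pair_iff_ne.2 hab) (injective_pair_iff_ne.2 hxy)
  exact ⟨σ, hσ 0, hσ 1⟩

theorem orbit_prod_diag (a : α) : orbit (Perm α) (a, a) = diagonal α := by
  ext ⟨x, y⟩
  constructor
  · rintro ⟨σ, hσ⟩
    simp only [Prod.smul_mk, Prod.mk.injEq] at hσ
    exact hσ.1.symm.trans hσ.2
  · rintro (rfl : x = y)
    obtain ⟨σ, hσ⟩ := exists_smul_eq (Perm α) a x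
    exact ⟨σ, by simp [hσ]⟩

theorem orbit_prod_of_ne {a b : α} (hab : a ≠ b) : orbit (Perm α) (a, b) = (diagonal α)ᶜ := by
  ext ⟨x, y⟩
  constructor
  · rintro ⟨σ, hσ⟩
    simp only [Prod.smul_mk, Prod.mk.injEq] at hσ
    rw [← hσ.1, ← hσ.2]
    exact σ.injective.ne hab
  · intro hxy
    obtain ⟨σ, hσa, hσb⟩ := exists_apply_eq_and_apply_eq hab hxy
    exact ⟨σ, by simp [hσa, hσb]⟩

end Equiv.Perm

theorem stable_subsets_of_pairs {D : Type*}
    (h : ∃ a b c : D, a ≠ b ∧ a ≠ c ∧ b ≠ c) :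
    (∀ S : Set (D × D),
      (∀ σ : Equiv.Perm D, (fun p : D × D => (σ p.1, σ p.2)) '' S = S) ↔
        (S = ∅ ∨ S = {p : D × D | p.1 = p.2} ∨ S = {p : D × D | p.1 ≠ p.2} ∨
          S = {p : D × D | p.1 = p.2} ∪ {p : D × D | p.1 ≠ p.2})) ∧
    {S : Set (D × D) |
      ∀ σ : Equiv.Perm D, (fun p : D × D => (σ p.1, σ p.2)) '' S = S}.ncard = 4 := by
  obtain ⟨a, b, -, hab, -, -⟩ := h
  -- the renaming action is the product action of `Perm D`, and `σ • S` is the image of `S`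
  change (∀ S, IsFixedBlock (Equiv.Perm D) S ↔
      S = ∅ ∨ S = diagonal D ∨ S = (diagonal D)ᶜ ∨ S = diagonal D ∪ (diagonal D)ᶜ) ∧
    {S | IsFixedBlock (Equiv.Perm D) S}.ncard = 4
  have hfixed := fun S : Set (D × D) => isFixedBlock_iff_of_orbit_eq_compl (S := S)
    (Equiv.Perm.orbit_prod_diag a) (Equiv.Perm.orbit_prod_of_ne hab)
  rw [union_compl_self]
  refine ⟨hfixed, ?_⟩
  have hset : {S | IsFixedBlock (Equiv.Perm D) S} = {∅, diagonal D, (diagonal D)ᶜ, univ} := by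
    ext S
    simpa using hfixed S
  rw [hset]
  exact ncard_insert_empty_compl_univ ⟨(a, a), rfl⟩ ⟨(a, b), hab⟩
end

section
/- Let D be a countably infinite type and T ⊆ D^ω stable under renamings. If for every n ∈ ℕ there exists a finite word of length n that is neither a good nor a bad prefix for T, then there exists an infinite trace t ∈ D^ω such that no finite prefix of t is a good or bad prefix for T. -/
/-- `w` is a good prefix for `T`: every infinite trace extending `w` is in `T`. -/
def GoodPrefix {D : Type*} (T : Set (ℕ → D)) (w : List D) : Prop :=
  ∀ t : ℕ → D, Extends w t → t ∈ T

/-- `w` is a bad prefix for `T`: no infinite trace extending `w` is in `T`. -/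
def BadPrefix {D : Type*} (T : Set (ℕ → D)) (w : List D) : Prop :=
  ∀ t : ℕ → D, Extends w t → t ∉ T

/-!
For a renaming-stable `T`, whether a word is a good or a bad prefix depends only on its equality
type, i.e. on which of its positions carry equal letters. Equality types are coded by restricted
growth sequences `x : ∀ n, Fin (n + 1)` (each letter coded by the position of its first
occurrence), which form a compact space. The codes of non-discriminating words of length `N` form
a decreasing sequence of nonempty closed sets, so some `x` lies in all of them, and then no prefix
of the trace `n ↦ e (x n)` is discriminating, for any injection `e : ℕ ↪ D`.
-/

theorem exists_perm_comp_eq_of_eq_iff_eq {ι D : Type*} [Finite ι] [Infinite D] {f g : ι → D}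
    (h : ∀ i j, f i = f j ↔ g i = g j) : ∃ σ : Equiv.Perm D, ⇑σ ∘ f = g := by
  let e : Set.range f ↪ D :=
    ⟨fun a => g (Set.rangeSplitting f a), fun a b hab => by
      rw [← Subtype.coe_inj, ← Set.apply_rangeSplitting f a, ← Set.apply_rangeSplitting f b]
      exact (h _ _).2 hab⟩
  have hcard : Cardinal.mk (Set.range f) < Cardinal.mk D :=
    (Set.finite_range f).lt_aleph0.trans_le (Cardinal.aleph0_le_mk D)
  obtain ⟨σ, hσ⟩ := Cardinal.extend_function_of_lt e hcard ⟨Equiv.refl D⟩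
  refine ⟨σ, funext fun i => ?_⟩
  have := hσ ⟨f i, Set.mem_range_self i⟩
  simp only [Function.comp_apply, this, e]
  exact (h _ _).1 (Set.apply_rangeSplitting f _)

theorem List.exists_restrictedGrowth_eq_iff_getElem_eq {D : Type*} (w : List D) :
    ∃ x : ∀ n, Fin (n + 1), ∀ i j : Fin w.length, (x i : ℕ) = x j ↔ w[i] = w[j] := by
  classical
  have hlt (i : Fin w.length) : w.idxOf w[i] < i + 1 :=
    (List.mem_take_iff_idxOf_lt (List.getElem_mem _)).1
      (List.mem_iff_getElem.2 ⟨i, by simp, by simp⟩)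
  refine ⟨fun n => if h : n < w.length then ⟨_, hlt ⟨n, h⟩⟩ else 0, fun i j => ?_⟩
  simp only [Fin.is_lt, dite_true]
  exact List.idxOf_inj (List.getElem_mem _)

section

variable {D E : Type*} {w w₁ w₂ : List D} {t : ℕ → D}

theorem Extends.map (f : D → E) (h : Extends w t) : Extends (w.map f) (f ∘ t) := by
  intro i
  simp [h ⟨i, by simpa using i.2⟩]

theorem Extends.of_prefix_s11 (hw : w₁ <+: w₂) (h : Extends w₂ t) : Extends w₁ t := fun i =>
  (h ⟨i, hw.length_le.trans_lt' i.2⟩).trans (hw.getElem i.2).symm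

theorem Extends.eq_ofFn (h : Extends w t) : w = List.ofFn fun i : Fin w.length => t i := by
  conv_lhs => rw [← List.ofFn_get w]
  exact congrArg _ (funext fun i => (h i).symm)

theorem ofFn_prefix_ofFn_succ (t : ℕ → D) (N : ℕ) :
    (List.ofFn fun i : Fin N => t i) <+: List.ofFn fun i : Fin (N + 1) => t i := by
  rw [List.ofFn_succ']
  exact List.prefix_concat _ _

def RenamingStable (T : Set (ℕ → D)) : Prop :=
  ∀ σ : Equiv.Perm D, ∀ t : ℕ → D, ⇑σ ∘ t ∈ T ↔ t ∈ T

def DiscriminatingPrefix (T : Set (ℕ → D)) (w : List D) : Prop :=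
  GoodPrefix T w ∨ BadPrefix T w

variable {T : Set (ℕ → D)}

theorem DiscriminatingPrefix.of_prefix_s11 (hw : w₁ <+: w₂) (h : DiscriminatingPrefix T w₁) :
    DiscriminatingPrefix T w₂ :=
  h.imp (fun hg t ht => hg t (ht.of_prefix_s11 hw)) (fun hb t ht => hb t (ht.of_prefix_s11 hw))

theorem GoodPrefix.map_perm (hT : RenamingStable T) (h : GoodPrefix T w) (σ : Equiv.Perm D) :
    GoodPrefix T (w.map σ) := fun t ht =>
  (hT σ⁻¹ t).1 (h _ (by simpa using ht.map ⇑σ⁻¹))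

theorem BadPrefix.map_perm (hT : RenamingStable T) (h : BadPrefix T w) (σ : Equiv.Perm D) :
    BadPrefix T (w.map σ) := fun t ht htT =>
  h _ (by simpa using ht.map ⇑σ⁻¹) ((hT σ⁻¹ t).2 htT)

theorem DiscriminatingPrefix.map_perm (hT : RenamingStable T) (h : DiscriminatingPrefix T w)
    (σ : Equiv.Perm D) : DiscriminatingPrefix T (w.map σ) :=
  h.imp (·.map_perm hT σ) (·.map_perm hT σ)

theorem discriminatingPrefix_map_perm_iff (hT : RenamingStable T) (σ : Equiv.Perm D) :
    DiscriminatingPrefix T (w.map σ) ↔ DiscriminatingPrefix T w :=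
  ⟨fun h => by simpa using h.map_perm hT σ⁻¹, fun h => h.map_perm hT σ⟩

theorem discriminatingPrefix_ofFn_iff [Infinite D] (hT : RenamingStable T) {n : ℕ}
    {f g : Fin n → D} (h : ∀ i j, f i = f j ↔ g i = g j) :
    DiscriminatingPrefix T (List.ofFn f) ↔ DiscriminatingPrefix T (List.ofFn g) := by
  obtain ⟨σ, rfl⟩ := exists_perm_comp_eq_of_eq_iff_eq h
  rw [← List.map_ofFn, discriminatingPrefix_map_perm_iff hT]

theorem exists_forall_not_discriminatingPrefix_ofFn [Infinite D] (hT : RenamingStable T)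
    (hall : ∀ n, ∃ w : List D, w.length = n ∧ ¬DiscriminatingPrefix T w) :
    ∃ t : ℕ → D, ∀ N, ¬DiscriminatingPrefix T (List.ofFn fun i : Fin N => t i) := by
  let e := Infinite.natEmbedding D
  let C (N : ℕ) : Set (∀ n, Fin (n + 1)) :=
    (fun x (i : Fin N) => x i) ⁻¹'
      {y | ¬DiscriminatingPrefix T (List.ofFn fun i : Fin N => e (y i))}
  have hclosed (N : ℕ) : IsClosed (C N) :=
    (isClosed_discrete _).preimage (continuous_pi fun i => continuous_apply _)
  have hmono (N : ℕ) : C (N + 1) ⊆ C N := fun x hx h =>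
    hx (h.of_prefix_s11 (ofFn_prefix_ofFn_succ (fun n => e (x n)) N))
  have hne (N : ℕ) : (C N).Nonempty := by
    obtain ⟨w, rfl, hw⟩ := hall N
    obtain ⟨x, hx⟩ := w.exists_restrictedGrowth_eq_iff_getElem_eq
    have hpat (i j : Fin w.length) : e (x i) = e (x j) ↔ w.get i = w.get j := by
      simpa [Fin.val_inj] using hx i j
    refine ⟨x, fun h => hw ?_⟩
    simpa only [List.ofFn_get] using (discriminatingPrefix_ofFn_iff hT hpat).1 h
  obtain ⟨x, hx⟩ :=
    IsCompact.nonempty_iInter_of_sequence_nonempty_isCompact_isClosed C hmono hne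
      (hclosed 0).isCompact hclosed
  exact ⟨fun n => e (x n), Set.mem_iInter.1 hx⟩

end

theorem exists_trace_with_no_discriminating_prefix_general
    {D : Type*} [Infinite D] (T : Set (ℕ → D))
    (hstable : ∀ σ : Equiv.Perm D, ∀ t : ℕ → D, (⇑σ ∘ t) ∈ T ↔ t ∈ T)
    (hall : ∀ n : ℕ, ∃ w : List D, w.length = n ∧ ¬GoodPrefix T w ∧ ¬BadPrefix T w) :
    ∃ t : ℕ → D, ∀ w : List D, Extends w t → ¬GoodPrefix T w ∧ ¬BadPrefix T w := by
  obtain ⟨t, ht⟩ := exists_forall_not_discriminatingPrefix_ofFn hstable fun n => by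
    simpa only [DiscriminatingPrefix, not_or] using hall n
  refine ⟨t, fun w hw => ?_⟩
  rw [hw.eq_ofFn]
  exact not_or.1 (ht _)

theorem exists_trace_with_no_discriminating_prefix
    {D : Type*} [Countable D] [Infinite D] (T : Set (ℕ → D))
    (hstable : ∀ σ : Equiv.Perm D, ∀ t : ℕ → D, (⇑σ ∘ t) ∈ T ↔ t ∈ T)
    (hall : ∀ n : ℕ, ∃ w : List D, w.length = n ∧ ¬GoodPrefix T w ∧ ¬BadPrefix T w) :
    ∃ t : ℕ → D, ∀ w : List D, Extends w t → ¬GoodPrefix T w ∧ ¬BadPrefix T w :=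
  exists_trace_with_no_discriminating_prefix_general T hstable hall
end

section
/- Let D be a countably infinite type and T ⊆ D^ω stable under renamings. Then T is completely monitorable if and only if there exist n ∈ ℕ and a set G ⊆ (Fin n → D), stable under letterwise bijections of D, such that T is exactly the set of infinite traces whose length-n initial segment lies in G. -/
/-! Complete monitorability makes `T` clopen, so every trace has a prefix deciding membership in
`T`. Renaming-stability reduces the question to equality patterns, and the pattern of any trace is
realised by a sequence `c` with `c i ≤ i`; these form the compact space `∏ i, [0, i]`, so the
open sets "decided at length `n`" cover it and one `n` works for all traces. Conversely a
condition on the first `n` letters is witnessed by the good and bad prefixes of length `n`. -/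

open PiNat

section

variable {D : Type*}

def IsPermInvariant {ι : Type*} (S : Set (ι → D)) : Prop :=
  ∀ σ : Equiv.Perm D, ∀ t : ι → D, (⇑σ ∘ t) ∈ S ↔ t ∈ S

theorem IsPermInvariant.image_comp {ι κ : Type*} {S : Set (ι → D)} (hS : IsPermInvariant S)
    (f : κ → ι) : IsPermInvariant ((· ∘ f) '' S) := by
  intro σ g
  constructor
  · rintro ⟨t, ht, hg⟩
    refine ⟨⇑σ⁻¹ ∘ t, (hS σ⁻¹ t).2 ht, ?_⟩
    simp only at hg ⊢
    rw [Function.comp_assoc, hg, ← Function.comp_assoc, Equiv.Perm.coe_inv,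
      Equiv.symm_comp_self, Function.id_comp]
  · rintro ⟨t, ht, rfl⟩
    exact ⟨⇑σ ∘ t, (hS σ t).2 ht, rfl⟩

theorem exists_perm_comp_eq [Infinite D] {ι : Type*} [Finite ι] {a b : ι → D}
    (h : ∀ i j, a i = a j ↔ b i = b j) : ∃ σ : Equiv.Perm D, ⇑σ ∘ a = b := by
  have hsplit : ∀ i, b (Set.rangeSplitting a ⟨a i, i, rfl⟩) = b i := fun i =>
    (h _ _).1 (Set.apply_rangeSplitting a _)
  let f : Set.range a ↪ D :=
    ⟨fun x => b (Set.rangeSplitting a x), fun x y hxy => by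
      simpa only [Set.apply_rangeSplitting, Subtype.ext_iff] using (h _ _).2 hxy⟩
  have hfin : Cardinal.mk (Set.range a) < Cardinal.mk D :=
    (Cardinal.lt_aleph0_of_finite _).trans_le (Cardinal.aleph0_le_mk D)
  obtain ⟨σ, hσ⟩ := Cardinal.extend_function_of_lt f hfin ⟨Equiv.refl D⟩
  exact ⟨σ, funext fun i => (hσ ⟨a i, i, rfl⟩).trans (hsplit i)⟩

theorem exists_eq_iff_eq_and_le_self (t : ℕ → D) :
    ∃ c : ℕ → ℕ, (∀ i, c i ≤ i) ∧ ∀ i j, c i = c j ↔ t i = t j := by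
  classical
  have hocc : ∀ i, ∃ j, t j = t i := fun i => ⟨i, rfl⟩
  refine ⟨fun i => Nat.find (hocc i), fun i => Nat.find_min' _ rfl, fun i j => ⟨fun hij => ?_, ?_⟩⟩
  · rw [← Nat.find_spec (hocc i), ← Nat.find_spec (hocc j)]
    exact congrArg t hij
  · intro hij
    simp only [hij]

def DecidesAt (T : Set (ℕ → D)) (n : ℕ) (t : ℕ → D) : Prop :=
  ∀ s ∈ cylinder t n, s ∈ T ↔ t ∈ T

namespace DecidesAt

variable {T : Set (ℕ → D)} {n : ℕ} {s t : ℕ → D}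

theorem mono {m : ℕ} (h : DecidesAt T n t) (hnm : n ≤ m) : DecidesAt T m t :=
  fun s hs => h s (cylinder_anti t hnm hs)

theorem of_mem_cylinder (h : DecidesAt T n t) (hs : s ∈ cylinder t n) : DecidesAt T n s :=
  fun u hu => (h u (mem_cylinder_iff_eq.1 hs ▸ hu)).trans (h s hs).symm

theorem comp_perm (hT : IsPermInvariant T) (h : DecidesAt T n t) (σ : Equiv.Perm D) :
    DecidesAt T n (⇑σ ∘ t) := by
  intro s hs
  have hs' : ⇑σ⁻¹ ∘ s ∈ cylinder t n := fun i hi => by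
    simp [hs i hi]
  rw [← hT σ⁻¹ s, hT σ t]
  exact h _ hs'

theorem isOpen_setOf_comp (T : Set (ℕ → D)) (n : ℕ) (e : ℕ → D) :
    IsOpen {c : ℕ → ℕ | DecidesAt T n (e ∘ c)} :=
  isOpen_iff_forall_mem_open.2 fun c hc =>
    ⟨cylinder c n, fun c' hc' => hc.of_mem_cylinder fun i hi => by simp [hc' i hi],
      isOpen_cylinder (E := fun _ => ℕ) c n, self_mem_cylinder c n⟩

end DecidesAt

theorem exists_forall_decidesAt [Infinite D] {T : Set (ℕ → D)} (hT : IsPermInvariant T)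
    (h : ∀ t, ∃ n, DecidesAt T n t) : ∃ n, ∀ t, DecidesAt T n t := by
  let e := Infinite.natEmbedding D
  have hcompact : IsCompact (Set.univ.pi fun i : ℕ => Set.Iic i) :=
    isCompact_univ_pi fun i => (Set.finite_Iic i).isCompact
  obtain ⟨N, hN⟩ := hcompact.elim_directed_cover (fun n => {c | DecidesAt T n (e ∘ c)})
    (fun n => DecidesAt.isOpen_setOf_comp T n e)
    (fun c _ => Set.mem_iUnion.2 (h (e ∘ c)))
    (Monotone.directed_le fun _ _ hnm _ hc => hc.mono hnm)
  refine ⟨N, fun t => ?_⟩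
  obtain ⟨c, hc_le, hc_eq⟩ := exists_eq_iff_eq_and_le_self t
  obtain ⟨σ, hσ⟩ := exists_perm_comp_eq (a := fun i : Fin N => e (c i)) (b := fun i => t i)
    fun i j => e.injective.eq_iff.trans (hc_eq i j)
  have hdec : DecidesAt T N (⇑σ ∘ e ∘ c) := (hN fun i _ => hc_le i).comp_perm hT σ
  exact hdec.of_mem_cylinder fun i hi => (congrFun hσ ⟨i, hi⟩).symm

theorem eq_setOf_mem_image_of_forall_decidesAt {T : Set (ℕ → D)} {n : ℕ}
    (h : ∀ t, DecidesAt T n t) :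
    T = {t : ℕ → D | (fun i : Fin n => t i) ∈ (· ∘ Fin.val) '' T} := by
  ext t
  refine ⟨fun ht => ⟨t, ht, rfl⟩, ?_⟩
  rintro ⟨s, hs, hst⟩
  exact (h s t fun i hi => (congrFun hst ⟨i, hi⟩).symm).2 hs

theorem Extends.cylinder_subset {w : List D} {t : ℕ → D} (h : Extends w t) :
    cylinder t w.length ⊆ {s | Extends w s} :=
  fun _ hs i => (hs i i.2).trans (h i)

theorem extends_ofFn_iff {n : ℕ} (g : Fin n → D) (t : ℕ → D) :
    Extends (List.ofFn g) t ↔ (fun i : Fin n => t i) = g := by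
  rw [Extends, funext_iff, Fin.forall_iff, Fin.forall_iff]
  simp

theorem setOf_mem_eq_setOf_extends {n : ℕ} (G : Set (Fin n → D)) :
    {t : ℕ → D | (fun i : Fin n => t i) ∈ G} = {t | ∃ w ∈ List.ofFn '' G, Extends w t} := by
  ext t
  simp [extends_ofFn_iff]

namespace CompletelyMonitorable

theorem exists_decidesAt {T : Set (ℕ → D)} (hT : CompletelyMonitorable T) (t : ℕ → D) :
    ∃ n, DecidesAt T n t := by
  obtain ⟨G, B, hG, hB⟩ := hT
  by_cases ht : t ∈ T
  · obtain ⟨w, hw, hwt⟩ := (hG ▸ ht : t ∈ {t | ∃ w ∈ G, Extends w t})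
    exact ⟨w.length, fun _ hs => iff_of_true (hG ▸ ⟨w, hw, hwt.cylinder_subset hs⟩) ht⟩
  · obtain ⟨w, hw, hwt⟩ := (hB ▸ ht : t ∈ {t | ∃ w ∈ B, Extends w t})
    exact ⟨w.length, fun s hs =>
      iff_of_false (hB ▸ ⟨w, hw, hwt.cylinder_subset hs⟩ : s ∈ Tᶜ) ht⟩

theorem setOf_mem {n : ℕ} (G : Set (Fin n → D)) :
    CompletelyMonitorable {t : ℕ → D | (fun i : Fin n => t i) ∈ G} :=
  ⟨_, _, setOf_mem_eq_setOf_extends G, setOf_mem_eq_setOf_extends Gᶜ⟩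

end CompletelyMonitorable

end

theorem completely_monitorable_iff_bounded_stable_characterisation_general
    {D : Type*} [Infinite D] (T : Set (ℕ → D))
    (hstable : ∀ σ : Equiv.Perm D, ∀ t : ℕ → D, (⇑σ ∘ t) ∈ T ↔ t ∈ T) :
    CompletelyMonitorable T ↔
      ∃ (n : ℕ) (G : Set (Fin n → D)),
        (∀ σ : Equiv.Perm D, ∀ g : Fin n → D, (⇑σ ∘ g) ∈ G ↔ g ∈ G) ∧
        T = {t : ℕ → D | (fun i : Fin n => t i) ∈ G} := by
  constructor
  · intro hT
    obtain ⟨n, hn⟩ := exists_forall_decidesAt hstable hT.exists_decidesAt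
    exact ⟨n, _, IsPermInvariant.image_comp hstable Fin.val,
      eq_setOf_mem_image_of_forall_decidesAt hn⟩
  · rintro ⟨n, G, -, rfl⟩
    exact CompletelyMonitorable.setOf_mem G

theorem completely_monitorable_iff_bounded_stable_characterisation
    {D : Type*} [Countable D] [Infinite D] (T : Set (ℕ → D))
    (hstable : ∀ σ : Equiv.Perm D, ∀ t : ℕ → D, (⇑σ ∘ t) ∈ T ↔ t ∈ T) :
    CompletelyMonitorable T ↔
      ∃ (n : ℕ) (G : Set (Fin n → D)),
        (∀ σ : Equiv.Perm D, ∀ g : Fin n → D, (⇑σ ∘ g) ∈ G ↔ g ∈ G) ∧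
        T = {t : ℕ → D | (fun i : Fin n => t i) ∈ G} :=
  completely_monitorable_iff_bounded_stable_characterisation_general T hstable
end
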